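/- For fixed μ > 0 and α > 0, if k, k' ∈ [μ + α, ∞) with |k − k'| ≤ ε, then |d(k) − d(k')| ≤ 3ε/((μ+α)·α), where d(k) = arctanh(μ/k)/k. -/

import Mathlib

/-- Inverse hyperbolic tangent. -/
noncomputable def artanh (x : ℝ) : ℝ := (1 / 2) * Real.log ((1 + x) / (1 - x))

/-!
`d'(k) = -μ / (k (k² - μ²)) - artanh (μ / k) / k²`. The elementary bound `artanh t ≤ t / (1 - t)`
(from `log x ≤ x - 1`) shows that each of the two terms is at most `1 / (k (k - μ))`, hence
`|d'| ≤ 2 / ((μ + α) α)` on `[μ + α, ∞)`, and the mean value inequality gives the estimate with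
constant `2`, a fortiori with `3`.
-/

theorem hasDerivAt_artanh {t : ℝ} (ht : |t| < 1) : HasDerivAt artanh (1 / (1 - t ^ 2)) t := by
  obtain ⟨h₁, h₂⟩ := abs_lt.mp ht
  have hp : 0 < 1 + t := by linarith
  have hm : 0 < 1 - t := by linarith
  have hsq : 0 < 1 - t ^ 2 := by nlinarith
  have hq : HasDerivAt (fun x => (1 + x) / (1 - x)) (2 / (1 - t) ^ 2) t :=
    (((hasDerivAt_id' t).const_add 1).div ((hasDerivAt_id' t).const_sub 1) hm.ne').congr_deriv
      (by ring)
  refine ((hq.log (div_pos hp hm).ne').const_mul (1 / 2 : ℝ)).congr_deriv ?_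
  field_simp
  ring

theorem artanh_nonneg {t : ℝ} (h₀ : 0 ≤ t) (h₁ : t < 1) : 0 ≤ artanh t := by
  have : 1 ≤ (1 + t) / (1 - t) := by rw [le_div_iff₀ (by linarith)]; linarith
  have := Real.log_nonneg this
  unfold artanh
  positivity

theorem artanh_le_div_one_sub {t : ℝ} (h₀ : -1 < t) (h₁ : t < 1) : artanh t ≤ t / (1 - t) := by
  have hm : 0 < 1 - t := by linarith
  have key : (1 + t) / (1 - t) - 1 = 2 * (t / (1 - t)) := by field_simp; ring
  have := Real.log_le_sub_one_of_pos (div_pos (by linarith : 0 < 1 + t) hm)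
  unfold artanh
  linarith

noncomputable def depth (μ k : ℝ) : ℝ := artanh (μ / k) / k

theorem hasDerivAt_depth {μ k : ℝ} (hk : |μ| < k) :
    HasDerivAt (depth μ) (-(μ / (k * (k ^ 2 - μ ^ 2)) + artanh (μ / k) / k ^ 2)) k := by
  have hk0 : 0 < k := (abs_nonneg μ).trans_lt hk
  have hsq : 0 < k ^ 2 - μ ^ 2 := by nlinarith [sq_abs μ, abs_nonneg μ]
  have hμk : |μ / k| < 1 := by rw [abs_div, abs_of_pos hk0, div_lt_one hk0]; exact hk
  have hinv : HasDerivAt (fun x => μ / x) (-μ / k ^ 2) k := by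
    simpa [div_eq_mul_inv] using (hasDerivAt_inv hk0.ne').const_mul μ
  refine (((hasDerivAt_artanh hμk).comp k hinv).div (hasDerivAt_id' k) hk0.ne').congr_deriv ?_
  simp only [Function.comp_apply]
  field_simp
  ring

theorem abs_deriv_depth_le {μ α k : ℝ} (hμ : 0 < μ) (hα : 0 < α) (hk : μ + α ≤ k) :
    |μ / (k * (k ^ 2 - μ ^ 2)) + artanh (μ / k) / k ^ 2| ≤ 2 / ((μ + α) * α) := by
  have hk0 : 0 < k := by linarith
  have hkμ : 0 < k - μ := by linarith
  have hsq : 0 < k ^ 2 - μ ^ 2 := by nlinarith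
  have ht : μ / k < 1 := (div_lt_one hk0).mpr (by linarith)
  have hfirst : μ / (k * (k ^ 2 - μ ^ 2)) ≤ 1 / (k * (k - μ)) := by
    rw [div_le_div_iff₀ (by positivity) (by positivity)]
    nlinarith [mul_pos hk0 hkμ]
  have hsecond : artanh (μ / k) / k ^ 2 ≤ 1 / (k * (k - μ)) := calc
    artanh (μ / k) / k ^ 2 ≤ μ / k / (1 - μ / k) / k ^ 2 := by
      gcongr
      exact artanh_le_div_one_sub (by linarith [div_pos hμ hk0]) ht
    _ = μ / k * (1 / (k * (k - μ))) := by field_simp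
    _ ≤ 1 / (k * (k - μ)) := mul_le_of_le_one_left (by positivity) ht.le
  have hprod : 1 / (k * (k - μ)) ≤ 1 / ((μ + α) * α) := by
    gcongr
    linarith
  have := artanh_nonneg (div_pos hμ hk0).le ht
  rw [abs_of_nonneg (by positivity)]
  linarith [show 2 / ((μ + α) * α) = 1 / ((μ + α) * α) + 1 / ((μ + α) * α) by ring]

theorem abs_depth_sub_le {μ α k k' : ℝ} (hμ : 0 < μ) (hα : 0 < α) (hk : μ + α ≤ k)
    (hk' : μ + α ≤ k') : |depth μ k - depth μ k'| ≤ 2 / ((μ + α) * α) * |k - k'| := by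
  have hderiv : ∀ x ∈ Set.Ici (μ + α),
      HasDerivWithinAt (depth μ) (-(μ / (x * (x ^ 2 - μ ^ 2)) + artanh (μ / x) / x ^ 2))
        (Set.Ici (μ + α)) x := fun x hx =>
    (hasDerivAt_depth (by rw [abs_of_pos hμ]; linarith [Set.mem_Ici.mp hx])).hasDerivWithinAt
  have hbound : ∀ x ∈ Set.Ici (μ + α),
      ‖-(μ / (x * (x ^ 2 - μ ^ 2)) + artanh (μ / x) / x ^ 2)‖ ≤ 2 / ((μ + α) * α) :=
    fun x hx => by rw [Real.norm_eq_abs, abs_neg]; exact abs_deriv_depth_le hμ hα hx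
  simpa only [Real.norm_eq_abs] using
    (convex_Ici (μ + α)).norm_image_sub_le_of_norm_hasDerivWithin_le hderiv hbound hk' hk

/-- For `μ, α > 0`, if `k, k' ∈ [μ+α, ∞)` with `|k − k'| ≤ ε`, then
`|d(k) − d(k')| ≤ 3ε/((μ+α)α)` where `d(k) = artanh(μ/k)/k`. -/
theorem depth_stability (μ α ε k k' : ℝ) (hμ : 0 < μ) (hα : 0 < α)
    (hk : μ + α ≤ k) (hk' : μ + α ≤ k') (hε : |k - k'| ≤ ε) :
    |artanh (μ / k) / k - artanh (μ / k') / k'| ≤ 3 * ε / ((μ + α) * α) := by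
  have hε₀ : 0 ≤ ε := (abs_nonneg _).trans hε
  calc |depth μ k - depth μ k'| ≤ 2 / ((μ + α) * α) * |k - k'| := abs_depth_sub_le hμ hα hk hk'
    _ ≤ 2 / ((μ + α) * α) * ε := by gcongr
    _ ≤ 3 * ε / ((μ + α) * α) := by
      rw [div_mul_eq_mul_div]
      gcongr
      linarith
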